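/- arXiv:1611.07121 — 4 statements merged into one kernel-verified Lean document; each statement's English description precedes it below -/
import Mathlib

section
/- Let ξ_1,…,ξ_d and η_1,…,η_d be characters of ℤ_n such that the harmonic frames they determine are unitarily equivalent via a unitary map U and a bijection σ of ℤ_n (i.e., v_k = U w_{σk} for all k, where v_k = (ξ_j(k))_j and w_k = (η_j(k))_j). Then there exists a ∈ ℤ_n with Σ_{j=1}^d ξ_j(1) = Σ_{j=1}^d η_j(a). -/
/-!
Inner products of harmonic frame vectors are character sums: since characters of a finite group
are unitary, `⟪w_a, w_b⟫ = ∑ j, η_j(b - a)`. A unitary equivalence preserves inner products, so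
`∑ j, ξ_j(1) = ⟪v_0, v_1⟫ = ⟪w_{σ 0}, w_{σ 1}⟫ = ∑ j, η_j(σ 1 - σ 0)`.
-/

open scoped InnerProductSpace

namespace AddChar

variable {G ι κ 𝕜 : Type*} [AddCommGroup G] [Finite G] [Fintype ι] [Fintype κ] [RCLike 𝕜]

def harmonicFrame (χ : ι → AddChar G 𝕜) (k : G) : EuclideanSpace 𝕜 ι :=
  WithLp.toLp 2 fun j => χ j k

theorem inner_harmonicFrame (χ : ι → AddChar G 𝕜) (a b : G) :
    ⟪harmonicFrame χ a, harmonicFrame χ b⟫_𝕜 = ∑ j, χ j (b - a) := by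
  refine Finset.sum_congr rfl fun j _ => ?_
  simp only [harmonicFrame, RCLike.inner_apply, sub_eq_add_neg, map_add_eq_mul, map_neg_eq_conj]

theorem sum_apply_eq_sum_apply_sub_of_harmonicFrame_eq
    (ξ : ι → AddChar G 𝕜) (η : κ → AddChar G 𝕜)
    (U : EuclideanSpace 𝕜 κ →ₗᵢ[𝕜] EuclideanSpace 𝕜 ι) (σ : G → G)
    (h : ∀ k, harmonicFrame ξ k = U (harmonicFrame η (σ k))) (g : G) :
    ∑ j, ξ j g = ∑ j, η j (σ g - σ 0) := by
  calc ∑ j, ξ j g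
      = ⟪harmonicFrame ξ 0, harmonicFrame ξ g⟫_𝕜 := by rw [inner_harmonicFrame, sub_zero]
    _ = ⟪harmonicFrame η (σ 0), harmonicFrame η (σ g)⟫_𝕜 := by rw [h, h, U.inner_map_map]
    _ = ∑ j, η j (σ g - σ 0) := inner_harmonicFrame η _ _

end AddChar

/-- If the harmonic frames determined by characters `ξ_1,…,ξ_d` and
`η_1,…,η_d` of `ℤ_n` are unitarily equivalent (via a unitary `U` and a
bijection `σ` of `ℤ_n`), then `∑ j, ξ j 1 = ∑ j, η j a` for some `a ∈ ℤ_n`. -/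
theorem unitarily_equivalent_harmonic_frames_sum_eq
    (n d : ℕ) [NeZero n]
    (ξ η : Fin d → AddChar (ZMod n) ℂ)
    (U : EuclideanSpace ℂ (Fin d) ≃ₗᵢ[ℂ] EuclideanSpace ℂ (Fin d))
    (σ : ZMod n ≃ ZMod n)
    (h : ∀ k : ZMod n,
      (WithLp.toLp 2 (fun j => ξ j k) : EuclideanSpace ℂ (Fin d))
        = U (WithLp.toLp 2 (fun j => η j (σ k)) : EuclideanSpace ℂ (Fin d))) :
    ∃ a : ZMod n, ∑ j, ξ j 1 = ∑ j, η j a :=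
  ⟨σ 1 - σ 0, AddChar.sum_apply_eq_sum_apply_sub_of_harmonicFrame_eq ξ η U.toLinearIsometry σ h 1⟩
end

section
/- Let a ∈ ℤ_n^* with a ≠ 1, acting on d-element subsets of ℤ_n by multiplication. Then the number of d-element subsets A ⊆ ℤ_n that generate ℤ_n and satisfy aA = A is at most n^{d−1}. -/
/-- For a unit `a ≠ 1` of `ℤ_n`, the number of `d`-element generating subsets
of `ℤ_n` fixed by multiplication by `a` is at most `n^{d-1}`. -/
theorem fixed_generating_subsets_le
    (n d : ℕ) [NeZero n] (a : (ZMod n)ˣ) (ha : a ≠ 1) :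
    Nat.card {A : Finset (ZMod n) //
        A.card = d ∧ AddSubgroup.closure (A : Set (ZMod n)) = ⊤ ∧
        A.image (fun x => (a : ZMod n) * x) = A}
      ≤ n ^ (d - 1) := by
  classical
  set P : ZMod n → Prop := fun x => (a : ZMod n) * x ≠ x with hP
  -- the fixed points form an additive subgroup
  have key : ∀ A : Finset (ZMod n),
      AddSubgroup.closure (A : Set (ZMod n)) = ⊤ → (A.filter P).Nonempty := by
    intro A hgen
    by_contra h
    have hall : ∀ x ∈ A, (a : ZMod n) * x = x := by
      intro x hx
      by_contra hx'
      exact h ⟨x, Finset.mem_filter.2 ⟨hx, hx'⟩⟩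
    set H : AddSubgroup (ZMod n) :=
      { carrier := {x | (a : ZMod n) * x = x}
        add_mem' := by intro x y hx hy; simp only [Set.mem_setOf_eq] at *; rw [mul_add, hx, hy]
        zero_mem' := by simp
        neg_mem' := by intro x hx; simp only [Set.mem_setOf_eq] at *; rw [mul_neg, hx] }
    have hsub : (A : Set (ZMod n)) ⊆ H := fun x hx => hall x hx
    have : (⊤ : AddSubgroup (ZMod n)) ≤ H := by
      rw [← hgen]; exact AddSubgroup.closure_le H |>.2 hsub
    have h1 : (a : ZMod n) * 1 = 1 := this (AddSubgroup.mem_top 1)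
    exact ha (Units.ext (by simpa using h1))
  -- canonical element with P, via minimal val
  have hbmem : ∀ (T : Finset (ZMod n)) (hT : T.Nonempty),
      (((T.image ZMod.val).min' (hT.image _) : ℕ) : ZMod n) ∈ T := by
    intro T hT
    obtain ⟨x, hx, hxv⟩ := Finset.mem_image.1 ((T.image ZMod.val).min'_mem (hT.image _))
    rw [← hxv, ZMod.natCast_rightInverse x]; exact hx
  set b : Finset (ZMod n) → ZMod n :=
    fun T => if hT : T.Nonempty then (((T.image ZMod.val).min' (hT.image _) : ℕ) : ZMod n) else 0
    with hb
  have hbT : ∀ T : Finset (ZMod n), T.Nonempty → b T ∈ T := by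
    intro T hT; rw [hb]; simp only [dif_pos hT]; exact hbmem T hT
  -- key monotonicity: if T' ⊆ T, T' nonempty, and b T ∈ T', then b T' = b T
  have hbeq : ∀ T T' : Finset (ZMod n), T' ⊆ T → (hT' : T'.Nonempty) → b T ∈ T' → b T' = b T := by
    intro T T' hsub hT' hbin
    have hT : T.Nonempty := hT'.mono hsub
    rw [hb]; simp only [dif_pos hT, dif_pos hT']
    congr 1
    have h1 : (T.image ZMod.val).min' (hT.image _) ≤ (T'.image ZMod.val).min' (hT'.image _) :=
      Finset.min'_subset _ (Finset.image_subset_image hsub)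
    obtain ⟨x, hxT, hxv⟩ := Finset.mem_image.1 ((T.image ZMod.val).min'_mem (hT.image _))
    have hbTx : b T = x := by
      rw [hb]; simp only [dif_pos hT]; rw [← hxv, ZMod.natCast_rightInverse x]
    have h2 : (T'.image ZMod.val).min' (hT'.image _) ≤ (b T).val :=
      Finset.min'_le _ _ (Finset.mem_image.2 ⟨b T, hbin, rfl⟩)
    rw [hbTx, hxv] at h2
    omega
  have main : ∀ A : Finset (ZMod n), AddSubgroup.closure (A : Set (ZMod n)) = ⊤ →
      A.image (fun x => (a : ZMod n) * x) = A →
      b (A.filter P) ∈ A ∧ (a : ZMod n) * b (A.filter P) ∈ A ∧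
      b ((A.erase ((a : ZMod n) * b (A.filter P))).filter P) = b (A.filter P) := by
    intro A hgen hfix
    have hT := key A hgen
    have hbA := hbT _ hT
    have hmem : b (A.filter P) ∈ A := (Finset.mem_filter.1 hbA).1
    have hPb : P (b (A.filter P)) := (Finset.mem_filter.1 hbA).2
    have hab : (a : ZMod n) * b (A.filter P) ∈ A := by
      have h' := Finset.mem_image_of_mem (fun x => (a : ZMod n) * x) hmem
      rwa [hfix] at h'
    have hin : b (A.filter P) ∈ (A.erase ((a : ZMod n) * b (A.filter P))).filter P :=
      Finset.mem_filter.2 ⟨Finset.mem_erase.2 ⟨Ne.symm hPb, hmem⟩, hPb⟩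
    exact ⟨hmem, hab, hbeq _ _ (Finset.filter_subset_filter _ (Finset.erase_subset _ _))
      ⟨_, hin⟩ hin⟩
  let F : {A : Finset (ZMod n) //
        A.card = d ∧ AddSubgroup.closure (A : Set (ZMod n)) = ⊤ ∧
        A.image (fun x => (a : ZMod n) * x) = A} →
      {S : Finset (ZMod n) // S.card = d - 1} :=
    fun A => ⟨A.1.erase ((a : ZMod n) * b (A.1.filter P)), by
      obtain ⟨hd, hgen, hfix⟩ := A.2
      rw [Finset.card_erase_of_mem (main A.1 hgen hfix).2.1, hd]⟩
  have hFinj : Function.Injective F := by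
    intro A1 A2 h
    obtain ⟨hd1, hgen1, hfix1⟩ := A1.2
    obtain ⟨hd2, hgen2, hfix2⟩ := A2.2
    have hS : A1.1.erase ((a : ZMod n) * b (A1.1.filter P))
        = A2.1.erase ((a : ZMod n) * b (A2.1.filter P)) := congrArg Subtype.val h
    have e1 := (main A1.1 hgen1 hfix1).2.2
    have e2 := (main A2.1 hgen2 hfix2).2.2
    rw [hS] at e1
    have hbb : b (A1.1.filter P) = b (A2.1.filter P) := by rw [← e1, e2]
    apply Subtype.ext
    rw [← Finset.insert_erase (main A1.1 hgen1 hfix1).2.1,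
      ← Finset.insert_erase (main A2.1 hgen2 hfix2).2.1, hbb, ← hS, hbb]
  calc Nat.card {A : Finset (ZMod n) //
        A.card = d ∧ AddSubgroup.closure (A : Set (ZMod n)) = ⊤ ∧
        A.image (fun x => (a : ZMod n) * x) = A}
      ≤ Nat.card {S : Finset (ZMod n) // S.card = d - 1} :=
        Nat.card_le_card_of_injective F hFinj
    _ = n.choose (d - 1) := by
        rw [Nat.card_eq_fintype_card, Fintype.card_subtype]
        have : (Finset.univ.filter fun S : Finset (ZMod n) => S.card = d - 1)
            = (Finset.univ : Finset (ZMod n)).powersetCard (d - 1) := by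
          ext S; simp [Finset.mem_powersetCard_univ]
        rw [this, Finset.card_powersetCard, Finset.card_univ, ZMod.card]
    _ ≤ n ^ (d - 1) := Nat.choose_le_pow _ _
end

section
/- Let a ∈ ℤ_n^* with a² ≠ 1. Then the number of d-element subsets A ⊆ ℤ_n that generate ℤ_n and satisfy aA = A is at most n^{d−2}; in particular for d = 2 there are no such subsets. -/
section aux

variable {n : ℕ} [NeZero n]

/-- the minimal-val element of `A` not fixed by multiplication by `a²`. -/
noncomputable def bOf (a : ZMod n) (A : Finset (ZMod n)) : ZMod n :=
  ((sInf (ZMod.val '' {x : ZMod n | x ∈ A ∧ a * (a * x) ≠ x}) : ℕ) : ZMod n)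

lemma bOf_spec (a : ZMod n) (A : Finset (ZMod n))
    (h : ∃ x ∈ A, a * (a * x) ≠ x) :
    bOf a A ∈ A ∧ a * (a * bOf a A) ≠ bOf a A ∧
      ∀ y ∈ A, a * (a * y) ≠ y → (bOf a A).val ≤ y.val := by
  obtain ⟨x, hxA, hx⟩ := h
  have hne : (ZMod.val '' {x : ZMod n | x ∈ A ∧ a * (a * x) ≠ x}).Nonempty :=
    ⟨x.val, ⟨x, ⟨hxA, hx⟩, rfl⟩⟩
  obtain ⟨y, hy, hyval⟩ := Nat.sInf_mem hne
  have hb : bOf a A = y := by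
    rw [bOf, ← hyval]
    exact ZMod.natCast_rightInverse y
  refine ⟨hb ▸ hy.1, hb ▸ hy.2, ?_⟩
  intro z hzA hz
  have : (bOf a A).val = sInf (ZMod.val '' {x : ZMod n | x ∈ A ∧ a * (a * x) ≠ x}) := by
    rw [hb, hyval]
  rw [this]
  exact Nat.sInf_le ⟨z, ⟨hzA, hz⟩, rfl⟩

lemma bOf_eq_of (a : ZMod n) (A S : Finset (ZMod n)) (hS : S ⊆ A)
    (hb : bOf a A ∈ S)
    (hA : ∃ x ∈ A, a * (a * x) ≠ x) :
    bOf a S = bOf a A := by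
  obtain ⟨hbA, hpb, hmin⟩ := bOf_spec a A hA
  have hS' : ∃ x ∈ S, a * (a * x) ≠ x := ⟨bOf a A, hb, hpb⟩
  obtain ⟨hbS, hpb', hmin'⟩ := bOf_spec a S hS'
  apply ZMod.val_injective
  exact le_antisymm (hmin' (bOf a A) hb hpb) (hmin (bOf a S) (hS hbS) hpb')

end aux

/-- For a unit `a` of `ℤ_n` with `a² ≠ 1`, the number of `d`-element
generating subsets of `ℤ_n` fixed by multiplication by `a` is at most
`n^{d-2}`; in particular, for `d = 2` there are no such subsets. -/
theorem fixed_generating_subsets_le_sq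
    (n d : ℕ) [NeZero n] (a : (ZMod n)ˣ) (ha : a ^ 2 ≠ 1) :
    Nat.card {A : Finset (ZMod n) //
        A.card = d ∧ AddSubgroup.closure (A : Set (ZMod n)) = ⊤ ∧
        A.image (fun x => (a : ZMod n) * x) = A}
      ≤ n ^ (d - 2) ∧
    (d = 2 → Nat.card {A : Finset (ZMod n) //
        A.card = d ∧ AddSubgroup.closure (A : Set (ZMod n)) = ⊤ ∧
        A.image (fun x => (a : ZMod n) * x) = A} = 0) := by
  set α := (ZMod n)
  -- every A satisfying the conditions contains an element b with a²b ≠ b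
  have key : ∀ A : Finset (ZMod n),
      AddSubgroup.closure (A : Set (ZMod n)) = ⊤ →
      A.image (fun x => (a : ZMod n) * x) = A →
      ∃ x ∈ A, (a : ZMod n) * ((a : ZMod n) * x) ≠ x := by
    intro A hcl himg
    by_contra h
    push_neg at h
    -- the fixed points form an additive subgroup
    set H : AddSubgroup (ZMod n) :=
      { carrier := {x | (a : ZMod n) * ((a : ZMod n) * x) = x}
        zero_mem' := by simp
        add_mem' := by
          intro x y hx hy
          simp only [Set.mem_setOf_eq] at *
          rw [mul_add, mul_add, hx, hy]
        neg_mem' := by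
          intro x hx
          simp only [Set.mem_setOf_eq] at *
          rw [mul_neg, mul_neg, hx] } with hH
    have hsub : (A : Set (ZMod n)) ⊆ H := fun x hx => h x hx
    have : (⊤ : AddSubgroup (ZMod n)) ≤ H := hcl ▸ (AddSubgroup.closure_le H).mpr hsub
    have h1 : (1 : ZMod n) ∈ H := this trivial
    have h1' : (a : ZMod n) * ((a : ZMod n) * 1) = 1 := h1
    apply ha
    ext
    rw [Units.val_pow_eq_pow_val, Units.val_one, pow_two, ← mul_one ((a:ZMod n) * (a:ZMod n)),
      mul_assoc, h1']
  -- membership of multiples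
  have memMul : ∀ A : Finset (ZMod n), A.image (fun x => (a : ZMod n) * x) = A →
      ∀ x ∈ A, (a : ZMod n) * x ∈ A := by
    intro A himg x hx
    rw [← himg]
    exact Finset.mem_image.mpr ⟨x, hx, rfl⟩
  -- the key structural facts about bOf
  have bfacts : ∀ A : Finset (ZMod n),
      AddSubgroup.closure (A : Set (ZMod n)) = ⊤ →
      A.image (fun x => (a : ZMod n) * x) = A →
      (bOf (a : ZMod n) A ∈ A ∧
       (a : ZMod n) * ((a : ZMod n) * bOf (a : ZMod n) A) ≠ bOf (a : ZMod n) A ∧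
       ∀ y ∈ A, (a : ZMod n) * ((a : ZMod n) * y) ≠ y → (bOf (a : ZMod n) A).val ≤ y.val) :=
    fun A hcl himg => bOf_spec (a : ZMod n) A (key A hcl himg)
  -- distinctness facts
  have distinct : ∀ A : Finset (ZMod n),
      AddSubgroup.closure (A : Set (ZMod n)) = ⊤ →
      A.image (fun x => (a : ZMod n) * x) = A →
      (a : ZMod n) * bOf (a : ZMod n) A ≠ bOf (a : ZMod n) A ∧
      (a : ZMod n) * ((a : ZMod n) * bOf (a : ZMod n) A) ≠ (a : ZMod n) * bOf (a : ZMod n) A := by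
    intro A hcl himg
    obtain ⟨hbA, hpb, -⟩ := bfacts A hcl himg
    have hab : (a : ZMod n) * bOf (a : ZMod n) A ≠ bOf (a : ZMod n) A := by
      intro h
      exact hpb (by rw [h]; exact h)
    exact ⟨hab, fun h => hab ((Units.mul_right_inj a).mp h)⟩
  constructor
  · -- main counting bound
    have inj : ∃ f : {A : Finset (ZMod n) //
        A.card = d ∧ AddSubgroup.closure (A : Set (ZMod n)) = ⊤ ∧
        A.image (fun x => (a : ZMod n) * x) = A} →
        {S : Finset (ZMod n) // S.card = d - 2}, Function.Injective f := by
      refine ⟨fun ⟨A, hcard, hcl, himg⟩ =>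
        ⟨(A.erase ((a : ZMod n) * bOf (a : ZMod n) A)).erase
          ((a : ZMod n) * ((a : ZMod n) * bOf (a : ZMod n) A)), ?_⟩, ?_⟩
      · obtain ⟨hbA, hpb, -⟩ := bfacts A hcl himg
        obtain ⟨hab, haab⟩ := distinct A hcl himg
        have h1 : (a : ZMod n) * bOf (a : ZMod n) A ∈ A := memMul A himg _ hbA
        have h2 : (a : ZMod n) * ((a : ZMod n) * bOf (a : ZMod n) A) ∈
            A.erase ((a : ZMod n) * bOf (a : ZMod n) A) :=
          Finset.mem_erase.mpr ⟨haab, memMul A himg _ h1⟩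
        rw [Finset.card_erase_of_mem h2, Finset.card_erase_of_mem h1, hcard]
        omega
      · rintro ⟨A₁, hcard₁, hcl₁, himg₁⟩ ⟨A₂, hcard₂, hcl₂, himg₂⟩ hEq
        have hSS : (A₁.erase ((a : ZMod n) * bOf (a : ZMod n) A₁)).erase
            ((a : ZMod n) * ((a : ZMod n) * bOf (a : ZMod n) A₁)) =
            (A₂.erase ((a : ZMod n) * bOf (a : ZMod n) A₂)).erase
            ((a : ZMod n) * ((a : ZMod n) * bOf (a : ZMod n) A₂)) :=
          congrArg Subtype.val hEq
        have key₁ := key A₁ hcl₁ himg₁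
        have key₂ := key A₂ hcl₂ himg₂
        obtain ⟨hbA₁, hpb₁, -⟩ := bfacts A₁ hcl₁ himg₁
        obtain ⟨hbA₂, hpb₂, -⟩ := bfacts A₂ hcl₂ himg₂
        obtain ⟨hab₁, haab₁⟩ := distinct A₁ hcl₁ himg₁
        obtain ⟨hab₂, haab₂⟩ := distinct A₂ hcl₂ himg₂
        have hbS₁ : bOf (a : ZMod n) A₁ ∈ (A₁.erase ((a : ZMod n) * bOf (a : ZMod n) A₁)).erase
            ((a : ZMod n) * ((a : ZMod n) * bOf (a : ZMod n) A₁)) :=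
          Finset.mem_erase.mpr ⟨fun h => hpb₁ (h ▸ rfl),
            Finset.mem_erase.mpr ⟨fun h => hab₁ (h ▸ rfl), hbA₁⟩⟩
        have hbS₂ : bOf (a : ZMod n) A₂ ∈ (A₂.erase ((a : ZMod n) * bOf (a : ZMod n) A₂)).erase
            ((a : ZMod n) * ((a : ZMod n) * bOf (a : ZMod n) A₂)) :=
          Finset.mem_erase.mpr ⟨fun h => hpb₂ (h ▸ rfl),
            Finset.mem_erase.mpr ⟨fun h => hab₂ (h ▸ rfl), hbA₂⟩⟩
        have hsub₁ : (A₁.erase ((a : ZMod n) * bOf (a : ZMod n) A₁)).erase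
            ((a : ZMod n) * ((a : ZMod n) * bOf (a : ZMod n) A₁)) ⊆ A₁ :=
          (Finset.erase_subset _ _).trans (Finset.erase_subset _ _)
        have hsub₂ : (A₂.erase ((a : ZMod n) * bOf (a : ZMod n) A₂)).erase
            ((a : ZMod n) * ((a : ZMod n) * bOf (a : ZMod n) A₂)) ⊆ A₂ :=
          (Finset.erase_subset _ _).trans (Finset.erase_subset _ _)
        have hb₁ := bOf_eq_of (a : ZMod n) A₁ _ hsub₁ hbS₁ key₁
        have hb₂ := bOf_eq_of (a : ZMod n) A₂ _ hsub₂ hbS₂ key₂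
        have hbb : bOf (a : ZMod n) A₁ = bOf (a : ZMod n) A₂ := by
          rw [← hb₁, ← hb₂, hSS]
        -- reconstruct A₁ and A₂
        have hrec : ∀ A : Finset (ZMod n),
            AddSubgroup.closure (A : Set (ZMod n)) = ⊤ →
            A.image (fun x => (a : ZMod n) * x) = A →
            insert ((a : ZMod n) * bOf (a : ZMod n) A)
              (insert ((a : ZMod n) * ((a : ZMod n) * bOf (a : ZMod n) A))
                ((A.erase ((a : ZMod n) * bOf (a : ZMod n) A)).erase
                  ((a : ZMod n) * ((a : ZMod n) * bOf (a : ZMod n) A)))) = A := by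
          intro A hcl himg
          obtain ⟨hbA, hpb, -⟩ := bfacts A hcl himg
          obtain ⟨hab, haab⟩ := distinct A hcl himg
          have h1 : (a : ZMod n) * bOf (a : ZMod n) A ∈ A := memMul A himg _ hbA
          have h2 : (a : ZMod n) * ((a : ZMod n) * bOf (a : ZMod n) A) ∈
              A.erase ((a : ZMod n) * bOf (a : ZMod n) A) :=
            Finset.mem_erase.mpr ⟨haab, memMul A himg _ h1⟩
          rw [Finset.insert_erase h2, Finset.insert_erase h1]
        apply Subtype.ext
        calc A₁ = _ := (hrec A₁ hcl₁ himg₁).symm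
          _ = A₂ := by rw [hSS, hbb, hrec A₂ hcl₂ himg₂]
    obtain ⟨f, hf⟩ := inj
    calc Nat.card _ ≤ Nat.card {S : Finset (ZMod n) // S.card = d - 2} :=
          Nat.card_le_card_of_injective f hf
      _ = n.choose (d - 2) := by
          rw [Nat.card_eq_fintype_card, Fintype.card_finset_len, ZMod.card]
      _ ≤ n ^ (d - 2) := Nat.choose_le_pow _ _
  · intro hd
    have : IsEmpty {A : Finset (ZMod n) //
        A.card = d ∧ AddSubgroup.closure (A : Set (ZMod n)) = ⊤ ∧
        A.image (fun x => (a : ZMod n) * x) = A} := by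
      constructor
      rintro ⟨A, hcard, hcl, himg⟩
      obtain ⟨hbA, hpb, -⟩ := bfacts A hcl himg
      obtain ⟨hab, haab⟩ := distinct A hcl himg
      have h1 : (a : ZMod n) * bOf (a : ZMod n) A ∈ A := memMul A himg _ hbA
      have h2 : (a : ZMod n) * ((a : ZMod n) * bOf (a : ZMod n) A) ∈ A :=
        memMul A himg _ h1
      have hsub : ({bOf (a : ZMod n) A, (a : ZMod n) * bOf (a : ZMod n) A,
          (a : ZMod n) * ((a : ZMod n) * bOf (a : ZMod n) A)} : Finset (ZMod n)) ⊆ A := by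
        intro x hx
        simp only [Finset.mem_insert, Finset.mem_singleton] at hx
        rcases hx with rfl | rfl | rfl <;> assumption
      have hcard3 : ({bOf (a : ZMod n) A, (a : ZMod n) * bOf (a : ZMod n) A,
          (a : ZMod n) * ((a : ZMod n) * bOf (a : ZMod n) A)} : Finset (ZMod n)).card = 3 := by
        rw [Finset.card_insert_of_notMem, Finset.card_insert_of_notMem,
          Finset.card_singleton]
        · simpa using Ne.symm haab
        · simp only [Finset.mem_insert, Finset.mem_singleton]
          push_neg
          exact ⟨Ne.symm hab, Ne.symm hpb⟩
      have := Finset.card_le_card hsub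
      rw [hcard3, hcard, hd] at this
      omega
    rw [Nat.card_eq_zero]
    exact Or.inl this
end

section
/- Let p be an odd prime and a ∈ ℤ_p^* of odd order j. Then the subgroup of ℤ_p^* generated by −1 and a is cyclic of order 2j with generator −a, and the number of d-element subsets of ℤ_p \ {0} invariant under both multiplication by a and by −1 is binomial((p−1)/(2j), d/(2j)) if 2j divides d, and 0 otherwise. -/
/-!
Since `-1` has order `2` and `a` has odd order `j`, `-a` has order `2j` and `(-a) ^ j = -1`, so
`-1` and `a` generate the cyclic group `H = ⟨-a⟩`. A subset of `ℤ_p \ {0}` invariant under `a`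
and `-1` is a union of cosets of `H` in `ℤ_p^*`, so the invariant `d`-element sets correspond to
the `d / 2j`-element subsets of `ℤ_p^* / H`, a set with `(p - 1) / 2j` elements.
-/

open Pointwise MulAction

theorem Units.orderOf_neg_one_eq_two {R : Type*} [Ring R] [Nontrivial R] (h : ringChar R ≠ 2) :
    orderOf (-1 : Rˣ) = 2 := by
  rw [← orderOf_units, Units.val_neg, Units.val_one, orderOf_neg_one, if_neg h]

theorem Units.orderOf_neg_of_odd {R : Type*} [Ring R] [Nontrivial R] (h : ringChar R ≠ 2)
    {u : Rˣ} (hu : Odd (orderOf u)) : orderOf (-u) = 2 * orderOf u := by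
  have hcop : (orderOf (-1 : Rˣ)).Coprime (orderOf u) := by
    rw [Units.orderOf_neg_one_eq_two h]; exact Nat.coprime_two_left.mpr hu
  rw [← neg_one_mul, (Commute.neg_one_left u).orderOf_mul_eq_mul_orderOf_of_coprime hcop,
    Units.orderOf_neg_one_eq_two h]

theorem Subgroup.closure_neg_one_pair_eq_zpowers_neg {G : Type*} [Group G] [HasDistribNeg G]
    {a : G} (ha : Odd (orderOf a)) : closure {-1, a} = zpowers (-a) := by
  have hneg_one : (-1 : G) ∈ zpowers (-a) :=
    ⟨orderOf a, by simp only [zpow_natCast, ha.neg_pow, pow_orderOf_eq_one]⟩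
  apply le_antisymm
  · rw [closure_le, Set.insert_subset_iff, Set.singleton_subset_iff]
    refine ⟨hneg_one, ?_⟩
    simpa using mul_mem hneg_one (mem_zpowers (-a))
  · rw [zpowers_le, ← neg_one_mul a]
    exact mul_mem (subset_closure (Set.mem_insert _ _))
      (subset_closure (Set.mem_insert_of_mem _ (Set.mem_singleton a)))

theorem Nat.card_finset_card_mul_eq (α : Type*) [Finite α] {n : ℕ} (hn : n ≠ 0) (d : ℕ) :
    Nat.card {B : Finset α // B.card * n = d} =
      if n ∣ d then (Nat.card α).choose (d / n) else 0 := by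
  have := Fintype.ofFinite α
  split_ifs with hd
  · have hiff (B : Finset α) : B.card * n = d ↔ B.card = d / n := by
      rw [Nat.eq_div_iff_mul_eq_left hn hd, eq_comm]
    rw [Nat.card_congr (Equiv.subtypeEquivRight hiff), Nat.card_eq_fintype_card,
      Fintype.card_finset_len, Nat.card_eq_fintype_card]
  · have : IsEmpty {B : Finset α // B.card * n = d} := ⟨fun B => hd (Dvd.intro_left _ B.2)⟩
    exact Nat.card_of_isEmpty

namespace QuotientGroup

variable {G : Type*} [CommGroup G] [Fintype G] (H : Subgroup G)

open scoped Classical in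
noncomputable def preimageFinset (B : Finset (G ⧸ H)) : Finset G :=
  {x | (x : G ⧸ H) ∈ B}

variable {H}

@[simp]
theorem mem_preimageFinset {B : Finset (G ⧸ H)} {x : G} :
    x ∈ preimageFinset H B ↔ (x : G ⧸ H) ∈ B := by
  simp [preimageFinset]

theorem card_preimageFinset (B : Finset (G ⧸ H)) :
    (preimageFinset H B).card = B.card * Nat.card H := by
  rw [← Nat.card_eq_finsetCard, ← Nat.card_eq_finsetCard B, mul_comm, ← Nat.card_prod]
  exact Nat.card_congr <| (Equiv.subtypeEquivRight fun x => mem_preimageFinset).trans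
    (preimageMkEquivSubgroupProdSet H B)

theorem preimageFinset_injective : Function.Injective (preimageFinset (G := G) H) := by
  intro B₁ B₂ h
  ext q
  obtain ⟨x, rfl⟩ := mk_surjective q
  simpa using congrArg (x ∈ ·) h

variable [DecidableEq G]

theorem le_stabilizer_preimageFinset (B : Finset (G ⧸ H)) :
    H ≤ stabilizer G (preimageFinset H B) := by
  intro h hh
  ext x
  rw [← Finset.inv_smul_mem_iff, smul_eq_mul, mul_comm, mem_preimageFinset, mem_preimageFinset,
    mk_mul_of_mem x (inv_mem hh)]

theorem le_stabilizer_iff_exists_preimageFinset {A : Finset G} :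
    H ≤ stabilizer G A ↔ ∃ B, preimageFinset H B = A := by
  classical
  refine ⟨fun hA => ⟨A.image (↑), ?_⟩, fun ⟨B, hB⟩ => hB ▸ le_stabilizer_preimageFinset B⟩
  ext x
  simp only [mem_preimageFinset, Finset.mem_image]
  refine ⟨fun ⟨y, hy, hyx⟩ => ?_, fun hx => ⟨x, hx, rfl⟩⟩
  have hmem : y⁻¹ * x ∈ stabilizer G A := hA (QuotientGroup.eq.mp hyx)
  rw [← mem_stabilizer_iff.mp hmem]
  simpa using Finset.smul_mem_smul_finset (a := y⁻¹ * x) hy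

theorem card_finsets_le_stabilizer (d : ℕ) :
    Nat.card {A : Finset G // A.card = d ∧ H ≤ stabilizer G A} =
      if Nat.card H ∣ d then H.index.choose (d / Nat.card H) else 0 := by
  have himage : {A : Finset G | A.card = d ∧ H ≤ stabilizer G A} =
      preimageFinset H '' {B | B.card * Nat.card H = d} := by
    ext A
    simp only [Set.mem_ofPred_eq, Set.mem_image, le_stabilizer_iff_exists_preimageFinset]
    constructor
    · rintro ⟨rfl, B, rfl⟩
      exact ⟨B, (card_preimageFinset B).symm, rfl⟩
    · rintro ⟨B, hB, rfl⟩
      exact ⟨(card_preimageFinset B).trans hB, B, rfl⟩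
  rw [← Set.coe_ofPred, himage, Nat.card_image_of_injective preimageFinset_injective,
    H.index_eq_card]
  exact Nat.card_finset_card_mul_eq _ Nat.card_pos.ne' d

end QuotientGroup

section Units

variable {K : Type*} [DecidableEq K]

theorem Finset.exists_units_image_val_eq_iff [GroupWithZero K] {A : Finset K} :
    (∃ B : Finset Kˣ, B.image Units.val = A) ↔ (0 : K) ∉ A := by
  constructor
  · rintro ⟨B, rfl⟩ h
    obtain ⟨u, -, hu⟩ := Finset.mem_image.mp h
    exact u.ne_zero hu
  · intro h
    have hA : (A : Set K) ⊆ Units.val '' Set.univ := fun x hx =>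
      ⟨Units.mk0 x (ne_of_mem_of_not_mem hx h), trivial, rfl⟩
    obtain ⟨B, -, hB⟩ := Finset.subset_set_image_iff.mp hA
    exact ⟨B, hB⟩

theorem Finset.image_val_smul [Monoid K] (u : Kˣ) (B : Finset Kˣ) :
    (u • B).image Units.val = (B.image Units.val).image fun x => (u : K) * x := by
  rw [Finset.smul_finset_def, Finset.image_image, Finset.image_image]
  rfl

theorem Finset.image_mul_image_val_eq_iff [Monoid K] {u : Kˣ} {B : Finset Kˣ} :
    (B.image Units.val).image (fun x => (u : K) * x) = B.image Units.val ↔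
      u ∈ stabilizer Kˣ B := by
  rw [← Finset.image_val_smul, (Finset.image_injective Units.val_injective).eq_iff,
    mem_stabilizer_iff]

theorem Units.setOf_invariant_finset_eq_image_val [DivisionRing K] (a : Kˣ) (d : ℕ) :
    {A : Finset K | A.card = d ∧ (0 : K) ∉ A ∧
        A.image (fun x => (a : K) * x) = A ∧ A.image (fun x => -x) = A} =
      Finset.image Units.val ''
        {B : Finset Kˣ | B.card = d ∧ Subgroup.closure {-1, a} ≤ stabilizer Kˣ B} := by
  have hneg (A : Finset K) : A.image (fun x => -x) = A.image fun x => ((-1 : Kˣ) : K) * x := by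
    simp
  have hcard (B : Finset Kˣ) : (B.image Units.val).card = B.card :=
    Finset.card_image_of_injective _ Units.val_injective
  ext A
  simp only [Set.mem_ofPred_eq, Set.mem_image, Subgroup.closure_le, Set.insert_subset_iff,
    Set.singleton_subset_iff, SetLike.mem_coe]
  constructor
  · rintro ⟨hd, h0, ha, hn⟩
    obtain ⟨B, rfl⟩ := Finset.exists_units_image_val_eq_iff.mpr h0
    rw [hneg, Finset.image_mul_image_val_eq_iff] at hn
    rw [Finset.image_mul_image_val_eq_iff] at ha
    exact ⟨B, ⟨hcard B ▸ hd, hn, ha⟩, rfl⟩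
  · rintro ⟨B, ⟨hd, hn, ha⟩, rfl⟩
    exact ⟨(hcard B).trans hd, Finset.exists_units_image_val_eq_iff.mp ⟨B, rfl⟩,
      Finset.image_mul_image_val_eq_iff.mpr ha,
      (hneg _).trans (Finset.image_mul_image_val_eq_iff.mpr hn)⟩

end Units

/-- Let `p` be an odd prime and `a ∈ ℤ_p^*` of odd order `j`.  Then the
subgroup generated by `-1` and `a` is cyclic with generator `-a` of order
`2j`, and the number of `d`-element subsets of `ℤ_p \ {0}` invariant under
multiplication by both `a` and `-1` is `C((p-1)/(2j), d/(2j))` if `2j ∣ d`,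
and `0` otherwise. -/
theorem odd_order_real_invariant_subsets
    (p d j : ℕ) (hp : p.Prime) (hodd : p ≠ 2)
    (a : (ZMod p)ˣ) (hj : orderOf a = j) (hjodd : Odd j) :
    orderOf (-a) = 2 * j ∧
    Subgroup.closure {(-1 : (ZMod p)ˣ), a} = Subgroup.zpowers (-a) ∧
    Nat.card {A : Finset (ZMod p) //
        A.card = d ∧ (0 : ZMod p) ∉ A ∧
        A.image (fun x => (a : ZMod p) * x) = A ∧
        A.image (fun x => -x) = A}
      = if 2 * j ∣ d then ((p - 1) / (2 * j)).choose (d / (2 * j)) else 0 := by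
  have : Fact p.Prime := ⟨hp⟩
  subst hj
  have hchar : ringChar (ZMod p) ≠ 2 := by rwa [ZMod.ringChar_zmod_n]
  have hord : orderOf (-a) = 2 * orderOf a := Units.orderOf_neg_of_odd hchar hjodd
  have hcl := Subgroup.closure_neg_one_pair_eq_zpowers_neg hjodd
  have hcard : Nat.card (Subgroup.zpowers (-a)) = 2 * orderOf a := by
    rw [Nat.card_zpowers, hord]
  have hindex : (Subgroup.zpowers (-a)).index = (p - 1) / (2 * orderOf a) := by
    rw [← hcard, ← ZMod.card_units p, ← Nat.card_eq_fintype_card, ← Subgroup.index_mul_card,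
      Nat.mul_div_cancel _ Nat.card_pos]
  refine ⟨hord, hcl, ?_⟩
  rw [← Set.coe_ofPred, Units.setOf_invariant_finset_eq_image_val,
    Nat.card_image_of_injective (Finset.image_injective Units.val_injective), Set.coe_ofPred, hcl,
    QuotientGroup.card_finsets_le_stabilizer, hcard, hindex]
end
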